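/- Let G and H be finite simple graphs with G connected, and let G⊙H be their corona product with copies H_1, …, H_{n(G)} of H attached to the vertices v_1, …, v_{n(G)} of G. Then every distance-equalizer set S of G⊙H satisfies S ∩ ({v_i} ∪ V(H_i)) ≠ ∅ for every i ∈ {1, …, n(G)}; consequently, ξ(G⊙H) ≥ n(G). -/

import Mathlib

universe u v

variable {V : Type u} {W : Type v}

/-- A distance-equalizer set of a graph: for every pair of distinct vertices outside `S`
there is a vertex of `S` equidistant to both. -/
def IsDistEqSet {α : Type*} (G : SimpleGraph α) (S : Set α) : Prop :=
  ∀ ⦃x y : α⦄, x ∉ S → y ∉ S → x ≠ y → ∃ w ∈ S, G.dist w x = G.dist w y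

/-- The equidistant dimension of a graph: the minimum cardinality of a distance-equalizer set. -/
noncomputable def eqdim {α : Type*} (G : SimpleGraph α) : ℕ :=
  sInf {n | ∃ S : Set α, IsDistEqSet G S ∧ S.ncard = n}

/-- The bisector of two vertices: vertices equidistant to both. -/
def bisector {α : Type*} (G : SimpleGraph α) (x y : α) : Set α :=
  {w | G.dist w x = G.dist w y}

/-- The empty bisector graph of `G`: two distinct vertices are adjacent iff their bisector
in `G` is empty. -/
def emptyBisector {α : Type*} (G : SimpleGraph α) : SimpleGraph α where
  Adj x y := x ≠ y ∧ bisector G x y = ∅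
  symm := ⟨by
    rintro x y ⟨h1, h2⟩
    refine ⟨h1.symm, Set.eq_empty_iff_forall_notMem.mpr fun w hw => ?_⟩
    exact Set.eq_empty_iff_forall_notMem.mp h2 w
      ((show G.dist w y = G.dist w x from hw).symm)⟩
  loopless := ⟨fun _ h => h.1 rfl⟩

/-- A vertex cover of a graph: a set of vertices meeting every edge. -/
def IsVertexCover {α : Type*} (G : SimpleGraph α) (C : Set α) : Prop :=
  ∀ ⦃x y : α⦄, G.Adj x y → x ∈ C ∨ y ∈ C

/-- An independent set of a graph: a set of pairwise non-adjacent vertices. -/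
def IsIndepSet {α : Type*} (G : SimpleGraph α) (A : Set α) : Prop :=
  ∀ ⦃x y : α⦄, x ∈ A → y ∈ A → ¬ G.Adj x y

/-- The vertex cover number `β(G)`. -/
noncomputable def vcNum {α : Type*} (G : SimpleGraph α) : ℕ :=
  sInf {n | ∃ C : Set α, IsVertexCover G C ∧ C.ncard = n}

/-- The independence number `α(G)`. -/
noncomputable def indepNum {α : Type*} (G : SimpleGraph α) : ℕ :=
  sSup {n | ∃ A : Set α, IsIndepSet G A ∧ A.ncard = n}

/-- A forward-equalized pair `(X, Y)` of `G`: `X ∪ Y = V(G)` and for every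
`a ∈ X \ Y` and `b ∈ Y \ X` there is `w` with `d(w,a) = d(w,b) + 1`. -/
def IsForwardEqualizedPair {α : Type*} (G : SimpleGraph α) (X Y : Set α) : Prop :=
  X ∪ Y = Set.univ ∧
  ∀ ⦃a⦄, a ∈ X \ Y → ∀ ⦃b⦄, b ∈ Y \ X → ∃ w, G.dist w a = G.dist w b + 1

/-- `β*(G)`: the minimum of `|X ∩ Y|` over all pairs of vertex covers `X, Y` of the
empty bisector graph of `G` such that `(X, Y)` is a forward-equalized pair of `G`. -/
noncomputable def betaStar {α : Type*} (G : SimpleGraph α) : ℕ :=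
  sInf {n | ∃ X Y : Set α,
    IsVertexCover (emptyBisector G) X ∧ IsVertexCover (emptyBisector G) Y ∧
    IsForwardEqualizedPair G X Y ∧ (X ∩ Y).ncard = n}

/-- The corona product `G ⊙ H`: one copy of `H` for each vertex `i` of `G` (the vertices
`Sum.inr (i, w)`), with `i` joined to every vertex of its copy. -/
def corona (G : SimpleGraph V) (H : SimpleGraph W) : SimpleGraph (V ⊕ V × W) where
  Adj x y :=
    match x, y with
    | Sum.inl a, Sum.inl b => G.Adj a b
    | Sum.inl a, Sum.inr p => a = p.1
    | Sum.inr p, Sum.inl a => a = p.1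
    | Sum.inr p, Sum.inr q => p.1 = q.1 ∧ H.Adj p.2 q.2
  symm := ⟨by
    rintro (a | p) (b | q) h
    · exact h.symm
    · exact h
    · exact h
    · exact ⟨h.1.symm, h.2.symm⟩⟩
  loopless := ⟨by
    rintro (a | p) h
    · exact G.ne_of_adj h rfl
    · exact H.ne_of_adj h.2 rfl⟩

/-! In `G ⊙ H` the vertex `vᵢ` separates the copy `Hᵢ` from the rest of the graph,
so every vertex outside `{vᵢ} ∪ V(Hᵢ)` is strictly closer to `vᵢ` than to any vertex of `Hᵢ`.
Hence no such vertex equalizes `vᵢ` with a vertex of `Hᵢ`, and a distance-equalizer set must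
meet `{vᵢ} ∪ V(Hᵢ)`. These `n(G)` sets partition the vertices, which gives `ξ(G ⊙ H) ≥ n(G)`. -/

namespace SimpleGraph

variable {α : Type*} {G : SimpleGraph α} {B : Set α} {v : α}

theorem Walk.dist_add_one_le_length (hB : ∀ x ∈ B, ∀ y, G.Adj x y → y ∈ B ∨ y = v)
    {x y : α} (p : G.Walk x y) (hx : x ∈ B) (hy : y ∉ B) : G.dist v y + 1 ≤ p.length := by
  induction p with
  | nil => exact absurd hx hy
  | @cons x x' y hadj q ih =>
    rw [Walk.length_cons]
    rcases hB x hx x' hadj with hx' | rfl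
    · exact (ih hx' hy).trans (Nat.le_succ _)
    · exact Nat.succ_le_succ (dist_le q)

theorem Reachable.dist_add_one_le_dist (hB : ∀ x ∈ B, ∀ y, G.Adj x y → y ∈ B ∨ y = v)
    {x y : α} (hxy : G.Reachable x y) (hx : x ∈ B) (hy : y ∉ B) :
    G.dist v y + 1 ≤ G.dist x y := by
  obtain ⟨p, hp⟩ := hxy.exists_walk_length_eq_dist
  exact hp ▸ p.dist_add_one_le_length hB hx hy

end SimpleGraph

open SimpleGraph

theorem IsDistEqSet.inter_insert_nonempty_of_separating {α : Type*} {G : SimpleGraph α}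
    (hG : G.Connected) {S : Set α} (hS : IsDistEqSet G S) {B : Set α} {v : α}
    (hB : ∀ x ∈ B, ∀ y, G.Adj x y → y ∈ B ∨ y = v) (hvB : v ∉ B) (hBne : B.Nonempty) :
    (S ∩ insert v B).Nonempty := by
  by_contra hempty
  have hSout : ∀ s ∈ S, s ≠ v ∧ s ∉ B := fun s hs =>
    not_or.mp fun hsvB => hempty ⟨s, hs, hsvB⟩
  obtain ⟨x, hx⟩ := hBne
  obtain ⟨s, hs, hdist⟩ := hS (fun h => (hSout x h).2 hx) (fun h => (hSout v h).1 rfl)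
    (ne_of_mem_of_not_mem hx hvB)
  have hfar := (hG.preconnected x s).dist_add_one_le_dist hB hx (hSout s hs).2
  rw [dist_comm, ← hdist, dist_comm] at hfar
  omega

theorem le_eqdim_of_forall_le_ncard {α : Type*} [Finite α] {G : SimpleGraph α} {n : ℕ}
    (h : ∀ S : Set α, IsDistEqSet G S → n ≤ S.ncard) : n ≤ eqdim G :=
  le_csInf ⟨_, Set.univ, fun x _ hx => absurd (Set.mem_univ x) hx, rfl⟩
    fun _ ⟨S, hS, hcard⟩ => hcard ▸ h S hS

theorem Set.card_le_ncard_of_inter_fiber_nonempty {α ι : Type*} [Fintype ι] [Finite α]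
    (f : α → ι) {S : Set α} (h : ∀ i, (S ∩ f ⁻¹' {i}).Nonempty) : Fintype.card ι ≤ S.ncard := by
  have himage : f '' S = Set.univ :=
    Set.eq_univ_of_forall fun i => let ⟨x, hxS, hxi⟩ := h i; ⟨x, hxS, hxi⟩
  calc Fintype.card ι = (f '' S).ncard := by rw [himage, Set.ncard_univ, Nat.card_eq_fintype_card]
    _ ≤ S.ncard := Set.ncard_image_le

section Corona

variable {G : SimpleGraph V} {H : SimpleGraph W}

def coronaBase : V ⊕ V × W → V := Sum.elim id Prod.fst

theorem coronaBase_preimage_singleton (i : V) :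
    (coronaBase : V ⊕ V × W → V) ⁻¹' {i} =
      {Sum.inl i} ∪ {x : V ⊕ V × W | ∃ w : W, x = Sum.inr (i, w)} := by
  ext (a | ⟨j, w⟩) <;> simp [coronaBase, eq_comm]

theorem corona_reachable_inl_coronaBase (x : V ⊕ V × W) :
    (corona G H).Reachable (Sum.inl (coronaBase x)) x := by
  rcases x with a | p
  · rfl
  · exact Adj.reachable (G := corona G H) (show coronaBase (Sum.inr p) = p.1 from rfl)

theorem corona_connected (hG : G.Connected) : (corona G H).Connected := by
  have : Nonempty V := hG.nonempty
  let inlHom : G →g corona G H := ⟨Sum.inl, id⟩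
  refine Connected.mk fun x y => ?_
  exact (corona_reachable_inl_coronaBase x).symm.trans
    (((hG.preconnected _ _).map inlHom).trans (corona_reachable_inl_coronaBase y))

theorem corona_adj_mem_copy_or_eq_inl (i : V) :
    ∀ x ∈ {x : V ⊕ V × W | ∃ w : W, x = Sum.inr (i, w)}, ∀ y, (corona G H).Adj x y →
      y ∈ {x : V ⊕ V × W | ∃ w : W, x = Sum.inr (i, w)} ∨ y = Sum.inl i := by
  rintro _ ⟨w, rfl⟩ (a | ⟨j, w'⟩) hadj
  · exact Or.inr (congrArg Sum.inl hadj)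
  · exact Or.inl ⟨w', by rw [show i = j from hadj.1]⟩

end Corona

/-- For connected `G`, every distance-equalizer set `S` of the corona
product `G ⊙ H` meets `{vᵢ} ∪ V(Hᵢ)` for every vertex `i` of `G`; consequently
`ξ(G ⊙ H) ≥ n(G)`. -/
theorem corona_distEqSet_meets_copies [Fintype V] [Fintype W] [Nonempty W]
    (G : SimpleGraph V) (H : SimpleGraph W) (hG : G.Connected) :
    (∀ S : Set (V ⊕ V × W), IsDistEqSet (corona G H) S →
      ∀ i : V,
        (S ∩ ({Sum.inl i} ∪ {x : V ⊕ V × W | ∃ w : W, x = Sum.inr (i, w)})).Nonempty) ∧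
    Fintype.card V ≤ eqdim (corona G H) := by
  have hmeet : ∀ S : Set (V ⊕ V × W), IsDistEqSet (corona G H) S → ∀ i : V,
      (S ∩ ({Sum.inl i} ∪ {x : V ⊕ V × W | ∃ w : W, x = Sum.inr (i, w)})).Nonempty := by
    intro S hS i
    rw [Set.singleton_union]
    exact hS.inter_insert_nonempty_of_separating (corona_connected hG) (corona_adj_mem_copy_or_eq_inl i)
      (by simp) (let ⟨w⟩ := ‹Nonempty W›; ⟨_, w, rfl⟩)
  refine ⟨hmeet, le_eqdim_of_forall_le_ncard fun S hS => ?_⟩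
  refine Set.card_le_ncard_of_inter_fiber_nonempty coronaBase fun i => ?_
  rw [coronaBase_preimage_singleton]
  exact hmeet S hS i
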